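/- arXiv:2409.05911 — 2 statements merged into one kernel-verified Lean document; each statement's English description precedes it below -/
import Mathlib

section
/- Let τ : ℤ⁴ → ℂ satisfy the octahedral relation: for every n ∈ ℤ⁴ with n₁+n₂+n₃+n₄ = −2 and all 1 ≤ α < β < γ < δ ≤ 4: τ(n + e^α + e^β)·τ(n + e^γ + e^δ) − τ(n + e^α + e^γ)·τ(n + e^β + e^δ) + τ(n + e^α + e^δ)·τ(n + e^β + e^γ) = 0. Suppose moreover τ is doubly periodic with periods a = (5, −2, −2, −1) and b = (1, 1, −1, −1), i.e. τ(n + a) = τ(n) and τ(n + b) = τ(n) for all n ∈ ℤ⁴. Then the sequence a_l := τ(l, −l, 0, 0) satisfies the recurrence a_l² − a_{l+4}·a_{l−4} + a_{l+3}·a_{l−3} = 0 for all l ∈ ℤ. -/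
open Finset

/-- The octahedral (discrete Hirota) relation for a discrete tau function
`τ : ℤ⁴ → ℂ`. -/
def OctahedralRelation (τ : (Fin 4 → ℤ) → ℂ) : Prop :=
  ∀ n : Fin 4 → ℤ, (∑ i, n i) = -2 →
    ∀ α β γ δ : Fin 4, α < β → β < γ → γ < δ →
      τ (n + Pi.single α 1 + Pi.single β 1) * τ (n + Pi.single γ 1 + Pi.single δ 1)
        - τ (n + Pi.single α 1 + Pi.single γ 1) * τ (n + Pi.single β 1 + Pi.single δ 1)
        + τ (n + Pi.single α 1 + Pi.single δ 1) * τ (n + Pi.single β 1 + Pi.single γ 1) = 0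

/-!
On the root lattice `A₃ = {∑ yᵢ = 0}` the linear form `y ↦ y₀ + 4 y₂ − 3 y₃` has kernel
exactly `⟨a, b⟩` (as `y = (m, −m, 0, 0) + (y₃ − y₂) a + (y₂ − 2 y₃) b` with `m` its value), so a
doubly periodic `τ` is, on `A₃`, a function `A` of this form, and `A m = τ (m, −m, 0, 0)`.
Pushing the octahedral relation through the form, the six points `n + eᵅ + eᵝ` for
`n = (l − 1, −l − 1, 0, 0)` have indices `l, l, l + 4, l − 4, l − 3, l + 3`, which gives the
recurrence.
-/

def somosIndex : (Fin 4 → ℤ) →+ ℤ where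
  toFun y := y 0 + 4 * y 2 - 3 * y 3
  map_zero' := by simp
  map_add' y z := by simp only [Pi.add_apply]; ring

theorem somosIndex_apply (y : Fin 4 → ℤ) : somosIndex y = y 0 + 4 * y 2 - 3 * y 3 := rfl

theorem sum_add_single_add_single {ι R : Type*} [Fintype ι] [DecidableEq ι]
    [AddCommMonoidWithOne R] (n : ι → R) (i j : ι) :
    ∑ k, (n + Pi.single i 1 + Pi.single j 1 : ι → R) k = ∑ k, n k + 2 := by
  simp only [Pi.add_apply, sum_add_distrib, Finset.sum_pi_single', mem_univ, if_true, add_assoc,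
    one_add_one_eq_two]

theorem OctahedralRelation.threeTerm_of_factorization {τ : (Fin 4 → ℤ) → ℂ}
    (hτ : OctahedralRelation τ) {A : ℤ → ℂ} (φ : (Fin 4 → ℤ) →+ ℤ)
    (hA : ∀ y, ∑ i, y i = 0 → τ y = A (φ y))
    (n : Fin 4 → ℤ) (hn : ∑ i, n i = -2) :
    letI c : Fin 4 → ℤ := fun i => φ (Pi.single i 1)
    A (φ n + c 0 + c 1) * A (φ n + c 2 + c 3) - A (φ n + c 0 + c 2) * A (φ n + c 1 + c 3)
      + A (φ n + c 0 + c 3) * A (φ n + c 1 + c 2) = 0 := by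
  have hface (α β : Fin 4) :
      τ (n + Pi.single α 1 + Pi.single β 1) = A (φ n + φ (Pi.single α 1) + φ (Pi.single β 1)) := by
    rw [hA _ (by rw [sum_add_single_add_single, hn]; norm_num), map_add, map_add]
  simpa only [hface] using hτ n hn 0 1 2 3 (by decide) (by decide) (by decide)

theorem apply_eq_apply_somosIndex {β : Type*} {τ : (Fin 4 → ℤ) → β}
    (ha : Function.Periodic τ ![5, -2, -2, -1]) (hb : Function.Periodic τ ![1, 1, -1, -1])
    (y : Fin 4 → ℤ) (hy : ∑ i, y i = 0) :
    τ y = τ ![somosIndex y, -somosIndex y, 0, 0] := by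
  have hdecomp : y = ![somosIndex y, -somosIndex y, 0, 0]
      + (y 3 - y 2) • ![5, -2, -2, -1] + (y 2 - 2 * y 3) • ![1, 1, -1, -1] := by
    rw [Fin.sum_univ_four] at hy
    ext i
    fin_cases i <;>
      simp only [Fin.zero_eta, Fin.mk_one, Fin.reduceFinMk, somosIndex_apply, Pi.add_apply,
        Pi.smul_apply, smul_eq_mul, Matrix.cons_val] <;> linarith
  have hper := (ha.zsmul (y 3 - y 2)).add_period (hb.zsmul (y 2 - 2 * y 3))
  conv_lhs => rw [hdecomp, add_assoc]
  exact hper _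

/-- **The Somos-type recurrence A018896 from a doubly periodic tau function.**
If `τ : ℤ⁴ → ℂ` satisfies the octahedral relation and is periodic with periods
`a = (5, −2, −2, −1)` and `b = (1, 1, −1, −1)`, then `a_l := τ(l, −l, 0, 0)`
satisfies `a_l² − a_{l+4} a_{l−4} + a_{l+3} a_{l−3} = 0`. -/
theorem somos_recurrence_of_doubly_periodic_tau
    (τ : (Fin 4 → ℤ) → ℂ)
    (hτ : OctahedralRelation τ)
    (hper_a : ∀ n : Fin 4 → ℤ, τ (n + ![5, -2, -2, -1]) = τ n)
    (hper_b : ∀ n : Fin 4 → ℤ, τ (n + ![1, 1, -1, -1]) = τ n) :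
    ∀ l : ℤ,
      letI A : ℤ → ℂ := fun m => τ ![m, -m, 0, 0]
      A l ^ 2 - A (l + 4) * A (l - 4) + A (l + 3) * A (l - 3) = 0 := by
  intro l
  set A : ℤ → ℂ := fun m => τ ![m, -m, 0, 0]
  have key := hτ.threeTerm_of_factorization (A := A) somosIndex
    (apply_eq_apply_somosIndex hper_a hper_b) ![l - 1, -l - 1, 0, 0]
    (by simp only [Fin.sum_univ_four, Matrix.cons_val]; ring)
  simp only [somosIndex_apply, Matrix.cons_val, Pi.single_apply, Fin.reduceEq, if_true,
    if_false] at key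
  ring_nf at key ⊢
  linear_combination key
end

section
/- Let τ : ℤ⁴ → ℂ satisfy the octahedral relation: for every n ∈ ℤ⁴ with n₁+n₂+n₃+n₄ = −2 and all 1 ≤ α < β < γ < δ ≤ 4: τ(n + e^α + e^β)·τ(n + e^γ + e^δ) − τ(n + e^α + e^γ)·τ(n + e^β + e^δ) + τ(n + e^α + e^δ)·τ(n + e^β + e^γ) = 0. Suppose moreover τ is doubly periodic with periods a = (1, 3, −3, −1) and b = (0, 1, 2, −3), i.e. τ(n + a) = τ(n) and τ(n + b) = τ(n) for all n ∈ ℤ⁴. Then the sequence a_l := τ(0, 0, l, −l) satisfies the recurrence a_l·a_{l−6} − a_{l+3}·a_{l−9} + a_{l+2}·a_{l−8} = 0 for all l ∈ ℤ. -/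
/-!
Modulo the period lattice `⟨a, b⟩`, every point of `ℤ⁴` with coordinate sum `0` is congruent to
one of the form `(0, 0, m, -m)`. The six vertices of the octahedron based at `n = (-1, -1, l, -l)`
are therefore values of `A`, namely `A l, A (l - 6), A (l + 3), A (l - 9), A (l + 2), A (l - 8)`,
and the octahedral relation at `n` becomes the recurrence.
-/

open Finset

theorem Function.Periodic.apply_add_zsmul_add_zsmul {G M : Type*} [AddGroup G] {f : G → M}
    {a b : G} (ha : Function.Periodic f a) (hb : Function.Periodic f b) (x : G) (i j : ℤ) :
    f (x + i • a + j • b) = f x := by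
  rw [add_assoc]
  exact (ha.zsmul i).add_period (hb.zsmul j) x

/-- **A new Somos-type recurrence from a doubly periodic tau function.**
If `τ : ℤ⁴ → ℂ` satisfies the octahedral relation and is periodic with periods
`a = (1, 3, −3, −1)` and `b = (0, 1, 2, −3)`, then `a_l := τ(0, 0, l, −l)`
satisfies `a_l a_{l−6} − a_{l+3} a_{l−9} + a_{l+2} a_{l−8} = 0`. -/
theorem new_somos_recurrence_of_doubly_periodic_tau
    (τ : (Fin 4 → ℤ) → ℂ)
    (hτ : OctahedralRelation τ)
    (hper_a : ∀ n : Fin 4 → ℤ, τ (n + ![1, 3, -3, -1]) = τ n)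
    (hper_b : ∀ n : Fin 4 → ℤ, τ (n + ![0, 1, 2, -3]) = τ n) :
    ∀ l : ℤ,
      letI A : ℤ → ℂ := fun m => τ ![0, 0, m, -m]
      A l * A (l - 6) - A (l + 3) * A (l - 9) + A (l + 2) * A (l - 8) = 0 := by
  intro l
  dsimp only
  have shift (m i j : ℤ) {v : Fin 4 → ℤ}
      (hv : ![0, 0, m, -m] + i • ![1, 3, -3, -1] + j • ![0, 1, 2, -3] = v) :
      τ ![0, 0, m, -m] = τ v :=
    hv ▸ (Function.Periodic.apply_add_zsmul_add_zsmul hper_a hper_b _ i j).symm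
  set n : Fin 4 → ℤ := ![-1, -1, l, -l] with hn
  have hrel := hτ n (by simp [hn, Fin.sum_univ_four]) 0 1 2 3 (by decide) (by decide) (by decide)
  rw [shift l 0 0 (v := n + Pi.single 0 1 + Pi.single 1 1) ?_,
    shift (l - 6) (-1) 2 (v := n + Pi.single 2 1 + Pi.single 3 1) ?_,
    shift (l + 3) 0 (-1) (v := n + Pi.single 0 1 + Pi.single 2 1) ?_,
    shift (l - 9) (-1) 3 (v := n + Pi.single 1 1 + Pi.single 3 1) ?_,
    shift (l + 2) 0 (-1) (v := n + Pi.single 0 1 + Pi.single 3 1) ?_,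
    shift (l - 8) (-1) 3 (v := n + Pi.single 1 1 + Pi.single 2 1) ?_]
  · exact hrel
  all_goals
    ext k
    simp only [hn, Pi.add_apply, Pi.smul_apply, Pi.single_apply]
    fin_cases k <;> simp <;> ring
end
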